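/- Let s be a signed measure on a measurable space (α, 𝒜) and let g : α → ℝ be measurable, nonnegative, and |s|-integrable. Then there exists a measurable set A ⊆ α such that s is nonnegative on all measurable subsets of A and nonpositive on all measurable subsets of Aᶜ, and the function h¹ = g·χ_A − g·χ_{Aᶜ} satisfies |h¹| ≤ g pointwise and ∫ h¹ ds = ∫ g d|s|; moreover h² = −h¹ satisfies ∫ h² ds = −∫ g d|s|. Hence the supremum and infimum of ∫ h ds over measurable h with |h| ≤ g are attained and equal ±∫ g d|s|. -/

import Mathlib

/-! A Hahn set `A` is read off the mutual singularity of `s⁺` and `s⁻`: `s⁻` vanishes on `A` and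
`s⁺` on `Aᶜ`. Then `h¹ = g·χ_A − g·χ_{Aᶜ}` equals `g` `s⁺`-a.e. and `−g` `s⁻`-a.e., so
`∫ h¹ ds = ∫ g ds⁺ + ∫ g ds⁻ = ∫ g d|s|`, while for any `|h| ≤ g` both `∫ h ds⁺ ≤ ∫ g ds⁺` and
`−∫ h ds⁻ ≤ ∫ g ds⁻`. The lower bound follows by applying the upper one to `−h`. -/

open MeasureTheory

/-- The integral of a real function against a signed measure `s`, defined via the
Jordan decomposition `s = s⁺ − s⁻` as `∫ f ds⁺ − ∫ f ds⁻`. -/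
noncomputable def signedIntegral {α : Type*} [MeasurableSpace α]
    (s : SignedMeasure α) (f : α → ℝ) : ℝ :=
  (∫ a, f a ∂s.toJordanDecomposition.posPart) - ∫ a, f a ∂s.toJordanDecomposition.negPart

theorem abs_mul_indicator_sub_mul_indicator_compl {α : Type*} (A : Set α) (g : α → ℝ) (a : α) :
    |g a * A.indicator (fun _ => (1 : ℝ)) a - g a * Aᶜ.indicator (fun _ => (1 : ℝ)) a|
      = |g a| := by
  by_cases ha : a ∈ A <;> simp [ha]

namespace MeasureTheory

variable {α : Type*} [MeasurableSpace α]

theorem integral_mul_indicator_sub_mul_indicator_compl_of_ae_mem {μ : Measure α} {A : Set α}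
    (g : α → ℝ) (hA : ∀ᵐ a ∂μ, a ∈ A) :
    ∫ a, g a * A.indicator (fun _ => (1 : ℝ)) a - g a * Aᶜ.indicator (fun _ => (1 : ℝ)) a ∂μ
      = ∫ a, g a ∂μ := by
  refine integral_congr_ae ?_
  filter_upwards [hA] with a ha
  simp [ha]

theorem integral_mul_indicator_sub_mul_indicator_compl_of_ae_notMem {μ : Measure α} {A : Set α}
    (g : α → ℝ) (hA : ∀ᵐ a ∂μ, a ∉ A) :
    ∫ a, g a * A.indicator (fun _ => (1 : ℝ)) a - g a * Aᶜ.indicator (fun _ => (1 : ℝ)) a ∂μ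
      = -∫ a, g a ∂μ := by
  rw [← integral_neg]
  refine integral_congr_ae ?_
  filter_upwards [hA] with a ha
  simp [ha]

theorem integral_le_integral_of_abs_le {μ : Measure α} {g h : α → ℝ}
    (hh : AEStronglyMeasurable h μ) (hhg : ∀ a, |h a| ≤ g a) (hg : Integrable g μ) :
    ∫ a, h a ∂μ ≤ ∫ a, g a ∂μ :=
  integral_mono (hg.mono hh (ae_of_all _ fun a => (hhg a).trans (le_abs_self _))) hg
    fun a => (le_abs_self _).trans (hhg a)

namespace SignedMeasure

variable (s : SignedMeasure α)

theorem exists_posPart_compl_eq_zero_negPart_eq_zero :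
    ∃ A : Set α, MeasurableSet A ∧
      s.toJordanDecomposition.posPart Aᶜ = 0 ∧ s.toJordanDecomposition.negPart A = 0 := by
  obtain ⟨u, hu, hpos, hneg⟩ := s.toJordanDecomposition.mutuallySingular
  exact ⟨uᶜ, hu.compl, by rwa [compl_compl], hneg⟩

theorem nonneg_of_subset_of_negPart_eq_zero {A B : Set α}
    (hA : s.toJordanDecomposition.negPart A = 0) (hB : MeasurableSet B) (hBA : B ⊆ A) :
    0 ≤ s B := by
  have hB₀ : s.toJordanDecomposition.negPart.real B = 0 := by
    rw [measureReal_def, measure_mono_null hBA hA, ENNReal.toReal_zero]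
  rw [s.apply_eq_posPart_real_sub_negPart_real hB, hB₀, sub_zero]
  exact measureReal_nonneg

theorem nonpos_of_subset_of_posPart_eq_zero {A B : Set α}
    (hA : s.toJordanDecomposition.posPart A = 0) (hB : MeasurableSet B) (hBA : B ⊆ A) :
    s B ≤ 0 := by
  have hB₀ : s.toJordanDecomposition.posPart.real B = 0 := by
    rw [measureReal_def, measure_mono_null hBA hA, ENNReal.toReal_zero]
  rw [s.apply_eq_posPart_real_sub_negPart_real hB, hB₀, zero_sub, neg_nonpos]
  exact measureReal_nonneg

theorem integral_totalVariation {f : α → ℝ} (hf : Integrable f s.totalVariation) :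
    ∫ a, f a ∂s.totalVariation
      = (∫ a, f a ∂s.toJordanDecomposition.posPart)
        + ∫ a, f a ∂s.toJordanDecomposition.negPart :=
  integral_add_measure (hf.mono_measure (Measure.le_add_right le_rfl))
    (hf.mono_measure (Measure.le_add_left le_rfl))

end SignedMeasure

end MeasureTheory

section signedIntegral

variable {α : Type*} [MeasurableSpace α]

theorem signedIntegral_neg (s : SignedMeasure α) (f : α → ℝ) :
    signedIntegral s (fun a => -f a) = -signedIntegral s f := by
  simp only [signedIntegral, integral_neg]
  ring

theorem signedIntegral_le_integral_totalVariation {s : SignedMeasure α} {g h : α → ℝ}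
    (hh : Measurable h) (hhg : ∀ a, |h a| ≤ g a) (hg : Integrable g s.totalVariation) :
    signedIntegral s h ≤ ∫ a, g a ∂s.totalVariation := by
  have hpos := integral_le_integral_of_abs_le hh.aestronglyMeasurable hhg
    (hg.mono_measure (Measure.le_add_right le_rfl : s.toJordanDecomposition.posPart ≤ _))
  have hneg := integral_le_integral_of_abs_le (h := fun a => -h a) hh.neg.aestronglyMeasurable
    (fun a => (abs_neg (h a)).trans_le (hhg a))
    (hg.mono_measure (Measure.le_add_left le_rfl : s.toJordanDecomposition.negPart ≤ _))
  rw [integral_neg] at hneg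
  rw [signedIntegral, s.integral_totalVariation hg]
  linarith

theorem neg_integral_totalVariation_le_signedIntegral {s : SignedMeasure α} {g h : α → ℝ}
    (hh : Measurable h) (hhg : ∀ a, |h a| ≤ g a) (hg : Integrable g s.totalVariation) :
    -∫ a, g a ∂s.totalVariation ≤ signedIntegral s h := by
  have := signedIntegral_le_integral_totalVariation (h := fun a => -h a) hh.neg
    (fun a => (abs_neg (h a)).trans_le (hhg a)) hg
  rw [signedIntegral_neg] at this
  linarith

end signedIntegral

/-- For `g ≥ 0` measurable and `|s|`-integrable there is a Hahn positive set `A`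
for `s` such that `h¹ = g·χ_A − g·χ_{Aᶜ}` satisfies `|h¹| ≤ g` and
`∫ h¹ ds = ∫ g d|s|`, while `h² = −h¹` satisfies `∫ h² ds = −∫ g d|s|`; hence the
sup and inf of `∫ h ds` over measurable `h` with `|h| ≤ g` are attained and equal
`±∫ g d|s|`. -/
theorem exists_hahn_set_signedIntegral_extreme_weighted {α : Type*} [MeasurableSpace α]
    (s : SignedMeasure α) (g : α → ℝ) (hg_meas : Measurable g)
    (hg_nonneg : ∀ a, 0 ≤ g a) (hg_int : Integrable g s.totalVariation) :
    ∃ A : Set α, MeasurableSet A ∧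
      (∀ B : Set α, MeasurableSet B → B ⊆ A → 0 ≤ s B) ∧
      (∀ B : Set α, MeasurableSet B → B ⊆ Aᶜ → s B ≤ 0) ∧
      (∀ a, |g a * A.indicator (fun _ => (1 : ℝ)) a
              - g a * Aᶜ.indicator (fun _ => (1 : ℝ)) a| ≤ g a) ∧
      signedIntegral s
          (fun a => g a * A.indicator (fun _ => (1 : ℝ)) a
              - g a * Aᶜ.indicator (fun _ => (1 : ℝ)) a)
        = (∫ a, g a ∂s.totalVariation) ∧
      signedIntegral s
          (fun a => -(g a * A.indicator (fun _ => (1 : ℝ)) a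
              - g a * Aᶜ.indicator (fun _ => (1 : ℝ)) a))
        = -(∫ a, g a ∂s.totalVariation) ∧
      IsGreatest {r : ℝ | ∃ h : α → ℝ, Measurable h ∧ (∀ a, |h a| ≤ g a) ∧
          signedIntegral s h = r} (∫ a, g a ∂s.totalVariation) ∧
      IsLeast {r : ℝ | ∃ h : α → ℝ, Measurable h ∧ (∀ a, |h a| ≤ g a) ∧
          signedIntegral s h = r} (-(∫ a, g a ∂s.totalVariation)) := by
  obtain ⟨A, hA, hposA, hnegA⟩ := s.exists_posPart_compl_eq_zero_negPart_eq_zero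
  set h₁ : α → ℝ := fun a => g a * A.indicator (fun _ => (1 : ℝ)) a
    - g a * Aᶜ.indicator (fun _ => (1 : ℝ)) a
  have h₁_meas : Measurable h₁ :=
    (hg_meas.mul (measurable_const.indicator hA)).sub
      (hg_meas.mul (measurable_const.indicator hA.compl))
  have h₁_abs (a : α) : |h₁ a| ≤ g a :=
    (abs_mul_indicator_sub_mul_indicator_compl A g a).trans_le (abs_of_nonneg (hg_nonneg a)).le
  have h₁_int : signedIntegral s h₁ = ∫ a, g a ∂s.totalVariation := by
    rw [signedIntegral, integral_mul_indicator_sub_mul_indicator_compl_of_ae_mem g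
      (mem_ae_iff.2 hposA), integral_mul_indicator_sub_mul_indicator_compl_of_ae_notMem g
      (measure_eq_zero_iff_ae_notMem.1 hnegA), s.integral_totalVariation hg_int, sub_neg_eq_add]
  have h₁_neg_int : signedIntegral s (fun a => -h₁ a) = -∫ a, g a ∂s.totalVariation := by
    rw [signedIntegral_neg, h₁_int]
  refine ⟨A, hA, fun B hB => s.nonneg_of_subset_of_negPart_eq_zero hnegA hB,
    fun B hB => s.nonpos_of_subset_of_posPart_eq_zero hposA hB, h₁_abs, h₁_int, h₁_neg_int,
    ⟨⟨h₁, h₁_meas, h₁_abs, h₁_int⟩, ?_⟩,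
    ⟨⟨fun a => -h₁ a, h₁_meas.neg, fun a => (abs_neg _).trans_le (h₁_abs a), h₁_neg_int⟩, ?_⟩⟩
  · rintro _ ⟨h, hh, hhg, rfl⟩
    exact signedIntegral_le_integral_totalVariation hh hhg hg_int
  · rintro _ ⟨h, hh, hhg, rfl⟩
    exact neg_integral_totalVariation_le_signedIntegral hh hhg hg_int
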